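/- Dominance of the interconnection: under the hypotheses of the interconnection theorem (for i = 1,2, symmetric Pᵢ ∈ ℝ^{nᵢ×nᵢ}, γ ≥ 0, εᵢ ≥ 0, supply matrices Qᵢ, Lᵢ, Rᵢ ∈ ℝ^{m×m} with Qᵢ, Rᵢ symmetric, and vectors Δẋⁱ, Δxⁱ, Δuⁱ, Δyⁱ satisfying the two dissipation inequalities 2 (Δẋⁱ)ᵀ Pᵢ Δxⁱ + (Δxⁱ)ᵀ (2γPᵢ + εᵢ I) Δxⁱ ≤ [Δyⁱ; Δuⁱ]ᵀ [[Qᵢ, Lᵢ],[Lᵢᵀ, Rᵢ]] [Δyⁱ; Δuⁱ] and the interconnection Δu¹ = −Δy², Δu² = Δy¹ with zero external inputs), if moreover the matrix [[Q₁ + R₂, −L₁ + L₂ᵀ], [−L₁ᵀ + L₂, Q₂ + R₁]] is negative semidefinite, then with P = blockdiag(P₁, P₂) and ε = min{ε₁, ε₂}: 2 Δẋᵀ P Δx + Δxᵀ(2γP + εI)Δx ≤ 0, where Δx = [Δx¹; Δx²] and Δẋ = [Δẋ¹; Δẋ²]. -/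

import Mathlib

open Matrix

/-! Adding the two dissipation inequalities, the feedback law `Δu¹ = -Δy²`, `Δu² = Δy¹`
turns the sum of the two supplies into the quadratic form of the coupling matrix
`[[Q₁ + R₂, -L₁ + L₂ᵀ], [-L₁ᵀ + L₂, Q₂ + R₁]]` at `(Δy¹, Δy²)`, which is nonpositive.
On the storage side, the dominance form of `blockdiag(P₁, P₂)` splits into the two
individual forms, and lowering `εᵢ` to `min ε₁ ε₂` only decreases them. -/

section BlockForms

variable {α ι κ : Type*} [Fintype ι] [Fintype κ]

theorem sumElim_dotProduct_fromBlocks_mulVec_sumElim [NonUnitalNonAssocSemiring α]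
    (a c : ι → α) (b d : κ → α) (A : Matrix ι ι α) (B : Matrix ι κ α) (C : Matrix κ ι α)
    (D : Matrix κ κ α) :
    Sum.elim a b ⬝ᵥ fromBlocks A B C D *ᵥ Sum.elim c d =
      a ⬝ᵥ A *ᵥ c + a ⬝ᵥ B *ᵥ d + (b ⬝ᵥ C *ᵥ c + b ⬝ᵥ D *ᵥ d) := by
  simp only [fromBlocks_mulVec, Sum.elim_comp_inl, Sum.elim_comp_inr,
    sumElim_dotProduct_sumElim, dotProduct_add]

def supplyRate [NonUnitalNonAssocSemiring α] (Q L R : Matrix κ κ α) (y u : κ → α) : α :=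
  Sum.elim y u ⬝ᵥ fromBlocks Q L Lᵀ R *ᵥ Sum.elim y u

theorem supplyRate_add_supplyRate_feedback [CommRing α] (Q₁ L₁ R₁ Q₂ L₂ R₂ : Matrix κ κ α)
    (y₁ y₂ : κ → α) :
    supplyRate Q₁ L₁ R₁ y₁ (-y₂) + supplyRate Q₂ L₂ R₂ y₂ y₁ =
      Sum.elim y₁ y₂ ⬝ᵥ fromBlocks (Q₁ + R₂) (-L₁ + L₂ᵀ) (-L₁ᵀ + L₂) (Q₂ + R₁) *ᵥ
        Sum.elim y₁ y₂ := by
  simp only [supplyRate, sumElim_dotProduct_fromBlocks_mulVec_sumElim, add_mulVec, neg_mulVec,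
    mulVec_neg, dotProduct_add, dotProduct_neg, neg_dotProduct, dotProduct_transpose_mulVec]
  ring

end BlockForms

section Dominance

variable {ι κ : Type*} [Fintype ι] [DecidableEq ι] [Fintype κ] [DecidableEq κ]

def dominanceForm (P : Matrix ι ι ℝ) (γ ε : ℝ) (xdot x : ι → ℝ) : ℝ :=
  2 * (xdot ⬝ᵥ P *ᵥ x) + x ⬝ᵥ ((2 * γ) • P + ε • 1) *ᵥ x

theorem dominanceForm_eq (P : Matrix ι ι ℝ) (γ ε : ℝ) (xdot x : ι → ℝ) :
    dominanceForm P γ ε xdot x =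
      2 * (xdot ⬝ᵥ P *ᵥ x) + 2 * γ * (x ⬝ᵥ P *ᵥ x) + ε * (x ⬝ᵥ x) := by
  simp only [dominanceForm, add_mulVec, smul_mulVec, one_mulVec, dotProduct_add,
    dotProduct_smul, smul_eq_mul]
  ring

theorem dominanceForm_mono (P : Matrix ι ι ℝ) (γ : ℝ) {ε ε' : ℝ} (h : ε ≤ ε')
    (xdot x : ι → ℝ) : dominanceForm P γ ε xdot x ≤ dominanceForm P γ ε' xdot x := by
  rw [dominanceForm_eq, dominanceForm_eq]
  gcongr
  exact dotProduct_star_self_nonneg x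

theorem dominanceForm_fromBlocks_diagonal (P₁ : Matrix ι ι ℝ) (P₂ : Matrix κ κ ℝ) (γ ε : ℝ)
    (xdot₁ x₁ : ι → ℝ) (xdot₂ x₂ : κ → ℝ) :
    dominanceForm (fromBlocks P₁ 0 0 P₂) γ ε (Sum.elim xdot₁ xdot₂) (Sum.elim x₁ x₂) =
      dominanceForm P₁ γ ε xdot₁ x₁ + dominanceForm P₂ γ ε xdot₂ x₂ := by
  simp only [dominanceForm_eq, sumElim_dotProduct_fromBlocks_mulVec_sumElim,
    sumElim_dotProduct_sumElim, zero_mulVec, dotProduct_zero, add_zero, zero_add]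
  ring

end Dominance

theorem interconnection_dominance_general
    (n₁ n₂ m : ℕ)
    (P₁ : Matrix (Fin n₁) (Fin n₁) ℝ)
    (P₂ : Matrix (Fin n₂) (Fin n₂) ℝ)
    (γ : ℝ) (ε₁ ε₂ : ℝ)
    (Q₁ L₁ R₁ Q₂ L₂ R₂ : Matrix (Fin m) (Fin m) ℝ)
    (Δxdot₁ Δx₁ : Fin n₁ → ℝ) (Δxdot₂ Δx₂ : Fin n₂ → ℝ)
    (Δu₁ Δy₁ Δu₂ Δy₂ : Fin m → ℝ)
    (hdiss₁ : 2 * (Δxdot₁ ⬝ᵥ P₁.mulVec Δx₁) + Δx₁ ⬝ᵥ ((2 * γ) • P₁ + ε₁ • 1).mulVec Δx₁ ≤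
      (Sum.elim Δy₁ Δu₁) ⬝ᵥ (Matrix.fromBlocks Q₁ L₁ L₁ᵀ R₁).mulVec (Sum.elim Δy₁ Δu₁))
    (hdiss₂ : 2 * (Δxdot₂ ⬝ᵥ P₂.mulVec Δx₂) + Δx₂ ⬝ᵥ ((2 * γ) • P₂ + ε₂ • 1).mulVec Δx₂ ≤
      (Sum.elim Δy₂ Δu₂) ⬝ᵥ (Matrix.fromBlocks Q₂ L₂ L₂ᵀ R₂).mulVec (Sum.elim Δy₂ Δu₂))
    (hint₁ : Δu₁ = -Δy₂) (hint₂ : Δu₂ = Δy₁)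
    (hsupply : (-(Matrix.fromBlocks (Q₁ + R₂) (-L₁ + L₂ᵀ) (-L₁ᵀ + L₂) (Q₂ + R₁))).PosSemidef) :
    2 * ((Sum.elim Δxdot₁ Δxdot₂) ⬝ᵥ
        (Matrix.fromBlocks P₁ 0 0 P₂).mulVec (Sum.elim Δx₁ Δx₂)) +
      (Sum.elim Δx₁ Δx₂) ⬝ᵥ
        ((2 * γ) • (Matrix.fromBlocks P₁ 0 0 P₂) + (min ε₁ ε₂) • 1).mulVec
          (Sum.elim Δx₁ Δx₂) ≤ 0 := by
  subst Δu₁ Δu₂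
  have hcoupling := hsupply.dotProduct_mulVec_nonneg (Sum.elim Δy₁ Δy₂)
  rw [star_trivial, neg_mulVec, dotProduct_neg, neg_nonneg] at hcoupling
  calc dominanceForm (fromBlocks P₁ 0 0 P₂) γ (min ε₁ ε₂) (Sum.elim Δxdot₁ Δxdot₂)
          (Sum.elim Δx₁ Δx₂)
      = dominanceForm P₁ γ (min ε₁ ε₂) Δxdot₁ Δx₁ + dominanceForm P₂ γ (min ε₁ ε₂) Δxdot₂ Δx₂ :=
        dominanceForm_fromBlocks_diagonal ..
    _ ≤ dominanceForm P₁ γ ε₁ Δxdot₁ Δx₁ + dominanceForm P₂ γ ε₂ Δxdot₂ Δx₂ :=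
        add_le_add (dominanceForm_mono _ _ (min_le_left _ _) _ _)
          (dominanceForm_mono _ _ (min_le_right _ _) _ _)
    _ ≤ supplyRate Q₁ L₁ R₁ Δy₁ (-Δy₂) + supplyRate Q₂ L₂ R₂ Δy₂ Δy₁ := add_le_add hdiss₁ hdiss₂
    _ ≤ 0 := supplyRate_add_supplyRate_feedback Q₁ L₁ R₁ Q₂ L₂ R₂ Δy₁ Δy₂ ▸ hcoupling

/-- Dominance of the interconnection: under the hypotheses of the
interconnection theorem, with zero external inputs (`Δu¹ = −Δy²`, `Δu² = Δy¹`)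
and assuming `[[Q₁ + R₂, −L₁ + L₂ᵀ], [−L₁ᵀ + L₂, Q₂ + R₁]] ⪯ 0`, the combined
increment satisfies the dominance inequality
`2 Δẋᵀ P Δx + Δxᵀ(2γP + εI)Δx ≤ 0` with `P = blockdiag(P₁,P₂)`,
`ε = min{ε₁,ε₂}`. -/
theorem interconnection_dominance
    (n₁ n₂ m : ℕ)
    (P₁ : Matrix (Fin n₁) (Fin n₁) ℝ) (hP₁ : P₁.IsSymm)
    (P₂ : Matrix (Fin n₂) (Fin n₂) ℝ) (hP₂ : P₂.IsSymm)
    (γ : ℝ) (hγ : 0 ≤ γ) (ε₁ ε₂ : ℝ) (hε₁ : 0 ≤ ε₁) (hε₂ : 0 ≤ ε₂)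
    (Q₁ L₁ R₁ Q₂ L₂ R₂ : Matrix (Fin m) (Fin m) ℝ)
    (hQ₁ : Q₁.IsSymm) (hR₁ : R₁.IsSymm) (hQ₂ : Q₂.IsSymm) (hR₂ : R₂.IsSymm)
    (Δxdot₁ Δx₁ : Fin n₁ → ℝ) (Δxdot₂ Δx₂ : Fin n₂ → ℝ)
    (Δu₁ Δy₁ Δu₂ Δy₂ : Fin m → ℝ)
    (hdiss₁ : 2 * (Δxdot₁ ⬝ᵥ P₁.mulVec Δx₁) + Δx₁ ⬝ᵥ ((2 * γ) • P₁ + ε₁ • 1).mulVec Δx₁ ≤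
      (Sum.elim Δy₁ Δu₁) ⬝ᵥ (Matrix.fromBlocks Q₁ L₁ L₁ᵀ R₁).mulVec (Sum.elim Δy₁ Δu₁))
    (hdiss₂ : 2 * (Δxdot₂ ⬝ᵥ P₂.mulVec Δx₂) + Δx₂ ⬝ᵥ ((2 * γ) • P₂ + ε₂ • 1).mulVec Δx₂ ≤
      (Sum.elim Δy₂ Δu₂) ⬝ᵥ (Matrix.fromBlocks Q₂ L₂ L₂ᵀ R₂).mulVec (Sum.elim Δy₂ Δu₂))
    (hint₁ : Δu₁ = -Δy₂) (hint₂ : Δu₂ = Δy₁)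
    (hsupply : (-(Matrix.fromBlocks (Q₁ + R₂) (-L₁ + L₂ᵀ) (-L₁ᵀ + L₂) (Q₂ + R₁))).PosSemidef) :
    2 * ((Sum.elim Δxdot₁ Δxdot₂) ⬝ᵥ
        (Matrix.fromBlocks P₁ 0 0 P₂).mulVec (Sum.elim Δx₁ Δx₂)) +
      (Sum.elim Δx₁ Δx₂) ⬝ᵥ
        ((2 * γ) • (Matrix.fromBlocks P₁ 0 0 P₂) + (min ε₁ ε₂) • 1).mulVec
          (Sum.elim Δx₁ Δx₂) ≤ 0 :=
  interconnection_dominance_general n₁ n₂ m P₁ P₂ γ ε₁ ε₂ Q₁ L₁ R₁ Q₂ L₂ R₂ Δxdot₁ Δx₁ Δxdot₂ Δx₂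
    Δu₁ Δy₁ Δu₂ Δy₂ hdiss₁ hdiss₂ hint₁ hint₂ hsupply
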